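/- Let v be a vertex of T with two children v_1 and v_2. Then B(v) = χ(v) ∪ ((B'(v_1) ∩ A'(v_2)) ∪ (B'(v_2) ∩ A'(v_1))) if i(v) = i(v_1) = i(v_2); B(v) = χ(v) ∪ (B'(v_1) ∩ C'(v_2)) if i(v) = i(v_1) ≠ i(v_2); B(v) = χ(v) ∪ (B'(v_2) ∩ C'(v_1)) if i(v) = i(v_2) ≠ i(v_1); and B(v) = χ(v) if i(v) ≠ i(v_1) and i(v) ≠ i(v_2). -/

import Mathlib

/-- The vertex set of the subtree of `T` (rooted at `r`) rooted at `v`: those vertices `u`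
such that `v` lies on the (unique) path in `T` from `r` to `u`. -/
def descend {V : Type*} (T : SimpleGraph V) (r v : V) : Set V :=
  {u | ∀ p : T.Walk r u, p.IsPath → v ∈ p.support}

/-- `J(v)`: the indices of cells meeting the subtree rooted at `v`. -/
def Jset {V : Type*} (T : SimpleGraph V) (r : V) {k : ℕ} (U : Fin k → Set V) (v : V) :
    Set (Fin k) :=
  {j | (U j ∩ descend T r v).Nonempty}

/-- `B(v)`: the set of distances `d(s_{i(v)}, v)` over all placements `(s_j)_{j ∈ J(v)}`
of the sites inside the subtree `T(v)` realizing the cells `U_j ∩ T(v)` there. -/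
def Bset {V : Type*} (T : SimpleGraph V) (r : V) (d : V → V → ℝ) {k : ℕ}
    (U S : Fin k → Set V) (iv : V → Fin k) (v : V) : Set ℝ :=
  {x | ∃ st : Fin k → V,
    (∀ j ∈ Jset T r U v, st j ∈ S j ∩ descend T r v) ∧
    (∀ j ∈ Jset T r U v,
      {u | u ∈ descend T r v ∧ ∀ t ∈ Jset T r U v, d (st j) u ≤ d (st t) u} =
        U j ∩ descend T r v) ∧
    x = d (st (iv v)) v}

/-- `A(v)`: the set of `α > 0` such that, placing the site of the cell of `v` on a new
vertex `v_new` attached to `v` by an edge of length `α` (so at distance `α + d(v,u)` from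
every `u ∈ T(v)`), the remaining sites can be placed with `s_j ∈ S_j` so that the Voronoi
cells within the subtree `T(v)` of the extended tree `T⁺_α(v)` are the `U_j ∩ T(v)`. -/
def Aset {V : Type*} (T : SimpleGraph V) (r : V) (d : V → V → ℝ) {k : ℕ}
    (U S : Fin k → Set V) (iv : V → Fin k) (v : V) : Set ℝ :=
  {α | 0 < α ∧ ∃ st : Fin k → V,
    (∀ j ∈ Jset T r U v, j ≠ iv v → st j ∈ S j) ∧
    (∀ j ∈ Jset T r U v, j ≠ iv v →
      {u | u ∈ descend T r v ∧ (∀ t ∈ Jset T r U v, t ≠ iv v → d (st j) u ≤ d (st t) u) ∧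
          d (st j) u ≤ α + d v u} = U j ∩ descend T r v) ∧
    {u | u ∈ descend T r v ∧ ∀ t ∈ Jset T r U v, t ≠ iv v → α + d v u ≤ d (st t) u} =
      U (iv v) ∩ descend T r v}

/-- `A'(c) = {x − λ(vc) : x ∈ A(c)}`, for a child `c` of `v`. -/
def Ashift {V : Type*} (T : SimpleGraph V) (r : V) (w : Sym2 V → ℝ) (d : V → V → ℝ)
    {k : ℕ} (U S : Fin k → Set V) (iv : V → Fin k) (v c : V) : Set ℝ :=
  {x | ∃ y ∈ Aset T r d U S iv c, x = y - w s(v, c)}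

/-- `B'(c) = {x + λ(vc) : x ∈ B(c)}`, for a child `c` of `v`. -/
def Bshift {V : Type*} (T : SimpleGraph V) (r : V) (w : Sym2 V → ℝ) (d : V → V → ℝ)
    {k : ℕ} (U S : Fin k → Set V) (iv : V → Fin k) (v c : V) : Set ℝ :=
  {x | ∃ y ∈ Bset T r d U S iv c, x = y + w s(v, c)}

/-- `C'(c) = ⋃_{x ∈ B(c)} (x − λ(vc), x + λ(vc))`, for a child `c` of `v`. -/
def Cshift {V : Type*} (T : SimpleGraph V) (r : V) (w : Sym2 V → ℝ) (d : V → V → ℝ)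
    {k : ℕ} (U S : Fin k → Set V) (iv : V → Fin k) (v c : V) : Set ℝ :=
  {α | ∃ y ∈ Bset T r d U S iv c, y - w s(v, c) < α ∧ α < y + w s(v, c)}

/-- `χ(v)`: the singleton `{0}` when `v` itself is a valid site placement for its cell
(i.e. `v ∈ S_{i(v)}` and `0` lies in `A'(vⱼ)` or `C'(vⱼ)` for each child `vⱼ`, according
to whether `i(vⱼ) = i(v)` or not), and `∅` otherwise. -/
def chiSet {V : Type*} (T : SimpleGraph V) (r : V) (w : Sym2 V → ℝ) (d : V → V → ℝ)
    {k : ℕ} (U S : Fin k → Set V) (iv : V → Fin k) (v v₁ v₂ : V) : Set ℝ :=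
  {x | x = 0 ∧ v ∈ S (iv v) ∧
    (iv v = iv v₁ → (0 : ℝ) ∈ Ashift T r w d U S iv v v₁) ∧
    (iv v ≠ iv v₁ → (0 : ℝ) ∈ Cshift T r w d U S iv v v₁) ∧
    (iv v = iv v₂ → (0 : ℝ) ∈ Ashift T r w d U S iv v v₂) ∧
    (iv v ≠ iv v₂ → (0 : ℝ) ∈ Cshift T r w d U S iv v v₂)}

/-!
A placement of sites realizes the cells exactly when every vertex is *strictly* closer to the
site of its own cell than to every other site (a tie would put the vertex in two disjoint cells).
In this form the condition on `T(v)` splits into the condition at `v` and one condition on each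
child subtree `T(c)`. If the site `s` of the cell of `v` lies in `T(c)`, the restriction to `T(c)`
is a placement for `c` and `d(s, v) ∈ B'(c)`. If `s ∉ T(c)`, then `s` reaches `T(c)` through `v`,
so it acts on `T(c)` as the pseudo-site `v_new` at distance `d(s, v) + λ(vc)` from `c`: this gives
`d(s, v) ∈ A'(c)` when `c` lies in the cell of `v`, and otherwise a placement for `c` whose value
`y ∈ B(c)` satisfies `|d(s, v) - y| < λ(vc)`, i.e. `d(s, v) ∈ C'(c)`. Conversely, placements for
the two children glue along `v`: a site in one child subtree reaches the other subtree only
through `v`, where the strict condition at `v` already makes it lose to `s`.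
-/

open SimpleGraph Function

section Trees

variable {V : Type*} {T : SimpleGraph V}

theorem SimpleGraph.IsTree.support_subset_of_induce_connected (hT : T.IsTree) {W : Set V}
    (hW : (T.induce W).Connected) {x y : V} (hx : x ∈ W) (hy : y ∈ W) {p : T.Walk x y}
    (hp : p.IsPath) : ∀ z ∈ p.support, z ∈ W := by
  classical
  obtain ⟨q⟩ := hW.preconnected ⟨x, hx⟩ ⟨y, hy⟩
  have hpq : p = (q.map (Embedding.induce W).toHom).bypass :=
    (hT.existsUnique_path x y).unique hp (Walk.bypass_isPath _)
  intro z hz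
  rw [hpq] at hz
  have hz' : z ∈ (q.map (Embedding.induce W).toHom).support :=
    Walk.support_bypass_subset_support _ hz
  rw [Walk.support_map, List.mem_map] at hz'
  obtain ⟨⟨z', hz'W⟩, -, rfl⟩ := hz'
  exact hz'W

variable {r : V}

theorem mem_descend_self (v : V) : v ∈ descend T r v :=
  fun p _ => p.end_mem_support

theorem descend_subset_descend {c v : V} (hc : c ∈ descend T r v) :
    descend T r c ⊆ descend T r v := by
  classical
  intro u hu p hp
  have hcp := hu p hp
  exact p.support_takeUntil_subset_support hcp (hc _ (hp.takeUntil hcp))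

theorem mem_support_of_mem_descend_of_notMem {c x y : V} (hx : x ∈ descend T r c)
    (hy : y ∉ descend T r c) (p : T.Walk x y) : c ∈ p.support := by
  classical
  simp only [descend, Set.mem_ofPred_eq, not_forall] at hy
  obtain ⟨q, -, hcq⟩ := hy
  have hc := hx _ (q.append p.reverse).bypass_isPath
  have hc' := Walk.support_bypass_subset_support _ hc
  rw [Walk.support_append, List.mem_append] at hc'
  rcases hc' with h | h
  · exact absurd h hcq
  · simpa using List.mem_of_mem_tail h

theorem notMem_descend_of_mem_descend (hT : T.IsTree) {c v : V} (hc : c ∈ descend T r v)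
    (hne : c ≠ v) : v ∉ descend T r c := by
  classical
  intro hv
  obtain ⟨p, hp⟩ := (hT.existsUnique_path r v).exists
  have hcp := hv p hp
  have hvq := hc _ (hp.takeUntil hcp)
  have hpq : (p.takeUntil c hcp).takeUntil v hvq = p :=
    (hT.existsUnique_path r v).unique ((hp.takeUntil hcp).takeUntil hvq) hp
  have h₁ := (p.takeUntil c hcp).length_takeUntil_le_length hvq
  have h₂ := Walk.length_takeUntil_lt_length hcp hne
  rw [hpq] at h₁
  omega

end Trees

structure IsTreeMetric {V : Type*} (T : SimpleGraph V) (w : Sym2 V → ℝ) (d : V → V → ℝ) :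
    Prop where
  isTree : T.IsTree
  weight_pos : ∀ e ∈ T.edgeSet, 0 < w e
  sum_eq : ∀ (u v : V) (p : T.Walk u v), p.IsPath → (p.edges.map w).sum = d u v

namespace IsTreeMetric

variable {V : Type*} {T : SimpleGraph V} {w : Sym2 V → ℝ} {d : V → V → ℝ}
  (hm : IsTreeMetric T w d)
include hm

theorem exists_isPath (a b : V) : ∃ p : T.Walk a b, p.IsPath :=
  (hm.isTree.existsUnique_path a b).exists

theorem dist_self (a : V) : d a a = 0 := by
  simpa using (hm.sum_eq a a .nil (by simp)).symm

theorem dist_of_adj {a b : V} (h : T.Adj a b) : d a b = w s(a, b) := by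
  simpa using (hm.sum_eq a b (.cons h .nil) (by simp [h.ne])).symm

theorem weight_pos_of_adj {a b : V} (h : T.Adj a b) : 0 < w s(a, b) :=
  hm.weight_pos _ (T.mem_edgeSet.2 h)

theorem dist_comm (a b : V) : d a b = d b a := by
  obtain ⟨p, hp⟩ := hm.exists_isPath a b
  rw [← hm.sum_eq a b p hp, ← hm.sum_eq b a p.reverse hp.reverse]
  simp [List.sum_reverse]

theorem dist_add_dist_of_mem_support {a b m : V} {p : T.Walk a b} (hp : p.IsPath)
    (hmp : m ∈ p.support) : d a m + d m b = d a b := by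
  classical
  rw [← hm.sum_eq a b p hp, ← hm.sum_eq a m _ (hp.takeUntil hmp),
    ← hm.sum_eq m b _ (hp.dropUntil hmp), ← List.sum_append, ← List.map_append,
    ← Walk.edges_append, p.take_spec hmp]

theorem dist_triangle (a b c : V) : d a c ≤ d a b + d b c := by
  classical
  obtain ⟨p, hp⟩ := hm.exists_isPath a b
  obtain ⟨q, hq⟩ := hm.exists_isPath b c
  rw [← hm.sum_eq a b p hp, ← hm.sum_eq b c q hq,
    ← hm.sum_eq a c _ (p.append q).bypass_isPath, ← List.sum_append, ← List.map_append,
    ← Walk.edges_append]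
  refine ((p.append q).edges_bypass_sublist_edges.map w).sum_le_sum fun x hx => ?_
  obtain ⟨e, he, rfl⟩ := List.mem_map.1 hx
  exact (hm.weight_pos e ((p.append q).edges_subset_edgeSet he)).le

theorem dist_nonneg (a b : V) : 0 ≤ d a b := by
  linarith [hm.dist_triangle a b a, hm.dist_comm a b, hm.dist_self a]

variable {r v c : V}

theorem dist_parent_right (hadj : T.Adj v c) (hc : c ∈ descend T r v) {s : V}
    (hs : s ∈ descend T r c) : d s v = d s c + w s(v, c) := by
  obtain ⟨p, hp⟩ := hm.exists_isPath s v
  rw [← hm.dist_add_dist_of_mem_support hp (mem_support_of_mem_descend_of_notMem hs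
    (notMem_descend_of_mem_descend hm.isTree hc hadj.ne') p), hm.dist_comm c v,
    hm.dist_of_adj hadj]

theorem dist_parent_left (hadj : T.Adj v c) (hc : c ∈ descend T r v) {u : V}
    (hu : u ∈ descend T r c) : d v u = w s(v, c) + d c u := by
  rw [hm.dist_comm, hm.dist_parent_right hadj hc hu, hm.dist_comm, add_comm]

end IsTreeMetric

structure IsChildPair {V : Type*} (T : SimpleGraph V) (r v v₁ v₂ : V) : Prop where
  ne : v₁ ≠ v₂
  child_iff : ∀ c : V, (T.Adj v c ∧ c ∈ descend T r v) ↔ (c = v₁ ∨ c = v₂)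

namespace IsChildPair

variable {V : Type*} {T : SimpleGraph V} {r v v₁ v₂ : V} (hc : IsChildPair T r v v₁ v₂)
include hc

theorem symm : IsChildPair T r v v₂ v₁ :=
  ⟨hc.ne.symm, fun c => (hc.child_iff c).trans or_comm⟩

theorem adj_left : T.Adj v v₁ := ((hc.child_iff v₁).2 (.inl rfl)).1

theorem left_mem : v₁ ∈ descend T r v := ((hc.child_iff v₁).2 (.inl rfl)).2

theorem notMem_left (hT : T.IsTree) : v ∉ descend T r v₁ :=
  notMem_descend_of_mem_descend hT hc.left_mem hc.adj_left.ne'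

theorem eq_or_mem_descend (hT : T.IsTree) {u : V} (hu : u ∈ descend T r v) :
    u = v ∨ u ∈ descend T r v₁ ∨ u ∈ descend T r v₂ := by
  classical
  rcases eq_or_ne u v with huv | huv
  · exact .inl huv
  obtain ⟨p, hp⟩ := (hT.existsUnique_path r u).exists
  have hvp := hu p hp
  obtain ⟨c, hvc, q, hq⟩ := (p.dropUntil v hvp).exists_eq_cons_of_ne huv.symm
  have hcq : (Walk.cons hvc q).IsPath := hq ▸ hp.dropUntil hvp
  rw [Walk.cons_isPath_iff] at hcq
  have hcu : u ∈ descend T r c := fun p' hp' => by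
    rw [(hT.existsUnique_path r u).unique hp' hp]
    exact p.support_dropUntil_subset_support hvp (by simp [hq])
  have hcv : c ∈ descend T r v := by
    by_contra hcv
    simpa using hcq.2 (by simpa using mem_support_of_mem_descend_of_notMem hu hcv q.reverse)
  rcases (hc.child_iff c).1 ⟨hvc, hcv⟩ with rfl | rfl
  exacts [.inr (.inl hcu), .inr (.inr hcu)]

theorem disjoint_descend (hT : T.IsTree) : Disjoint (descend T r v₁) (descend T r v₂) := by
  refine Set.disjoint_left.2 fun u h₁ h₂ => hc.ne ?_
  obtain ⟨p, hp⟩ := (hT.existsUnique_path u v).exists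
  rw [hT.isAcyclic.eq_penultimate_of_adj_end hp hc.adj_left
      (mem_support_of_mem_descend_of_notMem h₁ (hc.notMem_left hT) p),
    hT.isAcyclic.eq_penultimate_of_adj_end hp hc.symm.adj_left
      (mem_support_of_mem_descend_of_notMem h₂ (hc.symm.notMem_left hT) p)]

theorem mem_support_of_mem_descend (hT : T.IsTree) {s u : V} (hs : s ∈ descend T r v₁)
    (hu : u ∈ descend T r v₂) {p : T.Walk s u} (hp : p.IsPath) : v ∈ p.support := by
  classical
  by_contra hvp
  have h₁ : v₁ ∈ p.support := mem_support_of_mem_descend_of_notMem hs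
    (Set.disjoint_right.1 (hc.disjoint_descend hT) hu) p
  have hq : (Walk.cons hc.adj_left (p.dropUntil v₁ h₁)).IsPath :=
    (hp.dropUntil h₁).cons fun h => hvp (p.support_dropUntil_subset_support h₁ h)
  have h₂ := mem_support_of_mem_descend_of_notMem hu (hc.symm.notMem_left hT)
    (Walk.cons hc.adj_left (p.dropUntil v₁ h₁)).reverse
  rw [Walk.support_reverse, List.mem_reverse] at h₂
  exact hc.ne (by simpa using (hT.isAcyclic.eq_snd_of_adj_start hq hc.symm.adj_left h₂).symm)

theorem dist_eq_add_of_notMem_descend {w : Sym2 V → ℝ} {d : V → V → ℝ}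
    (hm : IsTreeMetric T w d) {s u : V} (hs : s ∈ descend T r v) (hs₁ : s ∉ descend T r v₁)
    (hu : u ∈ descend T r v₁) : d s u = d s v + d v u := by
  rcases hc.eq_or_mem_descend hm.isTree hs with rfl | h | h
  · rw [hm.dist_self, zero_add]
  · exact absurd h hs₁
  · obtain ⟨p, hp⟩ := hm.exists_isPath s u
    exact (hm.dist_add_dist_of_mem_support hp
      (hc.symm.mem_support_of_mem_descend hm.isTree h hu hp)).symm

end IsChildPair

theorem Jset_mono {V : Type*} {T : SimpleGraph V} {r c v : V} {k : ℕ} {U : Fin k → Set V}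
    (hc : c ∈ descend T r v) : Jset T r U c ⊆ Jset T r U v :=
  fun _ ⟨z, hz, hzc⟩ => ⟨z, hz, descend_subset_descend hc hzc⟩

structure IsConnectedPartition {V ι : Type*} (T : SimpleGraph V) (U : ι → Set V)
    (iv : V → ι) : Prop where
  mem_iff : ∀ u j, u ∈ U j ↔ iv u = j
  connected : ∀ j, (T.induce (U j)).Connected

namespace IsConnectedPartition

variable {V : Type*} {T : SimpleGraph V} {r : V} {k : ℕ} {U : Fin k → Set V} {iv : V → Fin k}
  (hU : IsConnectedPartition T U iv)
include hU

theorem mem_self (u : V) : u ∈ U (iv u) := (hU.mem_iff u _).2 rfl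

theorem iv_mem_Jset {u v : V} (hu : u ∈ descend T r v) : iv u ∈ Jset T r U v :=
  ⟨u, hU.mem_self u, hu⟩

theorem subset_descend_of_mem_Jset (hT : T.IsTree) {c : V} {j : Fin k}
    (hj : j ∈ Jset T r U c) (hjc : j ≠ iv c) : U j ⊆ descend T r c := by
  obtain ⟨x, hx, hxc⟩ := hj
  intro y hy
  by_contra hyc
  obtain ⟨p, hp⟩ := (hT.existsUnique_path x y).exists
  exact hjc ((hU.mem_iff c j).1 (hT.support_subset_of_induce_connected (hU.connected j) hx hy hp
    c (mem_support_of_mem_descend_of_notMem hxc hyc p))).symm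

variable {v v₁ v₂ : V} (hc : IsChildPair T r v v₁ v₂) (hT : T.IsTree)
include hc hT

theorem iv_mem_Jset_left_iff : iv v ∈ Jset T r U v₁ ↔ iv v = iv v₁ :=
  ⟨fun h => by_contra fun hne =>
    hc.notMem_left hT (hU.subset_descend_of_mem_Jset hT h hne (hU.mem_self v)),
   fun h => h ▸ hU.iv_mem_Jset (mem_descend_self v₁)⟩

theorem eq_of_mem_Jset_left_right {j : Fin k} (hj₁ : j ∈ Jset T r U v₁)
    (hj₂ : j ∈ Jset T r U v₂) : j = iv v := by
  obtain ⟨x, hx, hx₁⟩ := hj₁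
  obtain ⟨y, hy, hy₂⟩ := hj₂
  obtain ⟨p, hp⟩ := (hT.existsUnique_path x y).exists
  exact ((hU.mem_iff v j).1 (hT.support_subset_of_induce_connected (hU.connected j) hx hy hp v
    (hc.mem_support_of_mem_descend hT hx₁ hy₂ hp))).symm

theorem mem_Jset_cases {j : Fin k} (hj : j ∈ Jset T r U v) :
    j = iv v ∨ j ∈ Jset T r U v₁ ∨ j ∈ Jset T r U v₂ := by
  obtain ⟨z, hz, hzv⟩ := hj
  rcases hc.eq_or_mem_descend hT hzv with rfl | h | h
  exacts [.inl ((hU.mem_iff z j).1 hz).symm, .inr (.inl ⟨z, hz, h⟩), .inr (.inr ⟨z, hz, h⟩)]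

theorem mem_descend_left_of_mem {j : Fin k} (hj : j ∈ Jset T r U v₁) (hjv : j ≠ iv v) {s : V}
    (hs : s ∈ U j) (hsv : s ∈ descend T r v) : s ∈ descend T r v₁ := by
  rcases hc.eq_or_mem_descend hT hsv with rfl | h | h
  · exact absurd ((hU.mem_iff s j).1 hs).symm hjv
  · exact h
  · exact absurd (hU.eq_of_mem_Jset_left_right hc hT hj ⟨s, hs, h⟩) hjv

end IsConnectedPartition

def StrictCells {V ι : Type*} (iv : V → ι) (D : Set V) (J : Set ι) (φ : ι → V → ℝ) : Prop :=
  ∀ u ∈ D, ∀ t ∈ J, t ≠ iv u → φ (iv u) u < φ t u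

namespace StrictCells

variable {V ι : Type*} {iv : V → ι} {D D' : Set V} {J J' : Set ι} {φ ψ : ι → V → ℝ}

theorem mono (h : StrictCells iv D J φ) (hD : D' ⊆ D) (hJ : J' ⊆ J) :
    StrictCells iv D' J' φ :=
  fun u hu t ht => h u (hD hu) t (hJ ht)

theorem congr (h : StrictCells iv D J φ) (hD : ∀ u ∈ D, iv u ∈ J)
    (hφ : ∀ j ∈ J, ∀ u ∈ D, φ j u = ψ j u) : StrictCells iv D J ψ := by
  intro u hu t ht htu
  rw [← hφ _ (hD u hu) u hu, ← hφ t ht u hu]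
  exact h u hu t ht htu

theorem le (h : StrictCells iv D J φ) {u : V} (hu : u ∈ D) {t : ι} (ht : t ∈ J) :
    φ (iv u) u ≤ φ t u := by
  rcases eq_or_ne t (iv u) with rfl | htu
  exacts [le_rfl, (h u hu t ht htu).le]

end StrictCells

theorem cells_eq_iff_strictCells {V ι : Type*} {iv : V → ι} {U : ι → Set V} {D : Set V}
    {J : Set ι} {φ : ι → V → ℝ} (hU : ∀ u j, u ∈ U j ↔ iv u = j) (hD : ∀ u ∈ D, iv u ∈ J) :
    (∀ j ∈ J, {u | u ∈ D ∧ ∀ t ∈ J, φ j u ≤ φ t u} = U j ∩ D) ↔ StrictCells iv D J φ := by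
  constructor
  · intro h u hu t ht htu
    have hmin : ∀ t ∈ J, φ (iv u) u ≤ φ t u := by
      have hu' : u ∈ U (iv u) ∩ D := ⟨(hU u _).2 rfl, hu⟩
      rw [← h _ (hD u hu)] at hu'
      exact hu'.2
    refine (hmin t ht).lt_of_ne fun heq => htu ?_
    have hu' : u ∈ {u | u ∈ D ∧ ∀ t' ∈ J, φ t u ≤ φ t' u} := ⟨hu, fun t' ht' => heq ▸ hmin t' ht'⟩
    rw [h t ht] at hu'
    exact ((hU u t).1 hu'.1).symm
  · intro h j hj
    ext u
    simp only [Set.mem_ofPred_eq, Set.mem_inter_iff, hU]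
    constructor
    · rintro ⟨hu, hmin⟩
      refine ⟨by_contra fun hne => (h u hu j hj (Ne.symm hne)).not_ge (hmin _ (hD u hu)), hu⟩
    · rintro ⟨rfl, hu⟩
      exact ⟨hu, fun t ht => h.le hu ht⟩

def RealizesCells {V : Type*} (T : SimpleGraph V) (r : V) (d : V → V → ℝ) {k : ℕ}
    (U S : Fin k → Set V) (iv : V → Fin k) (v : V) (st : Fin k → V) : Prop :=
  (∀ j ∈ Jset T r U v, st j ∈ S j ∩ descend T r v) ∧
    StrictCells iv (descend T r v) (Jset T r U v) fun j => d (st j)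

section Characterizations

variable {V : Type*} {T : SimpleGraph V} {r : V} {d : V → V → ℝ} {k : ℕ} {U S : Fin k → Set V}
  {iv : V → Fin k}

theorem mem_Bset_iff (hU : IsConnectedPartition T U iv) {v : V} {x : ℝ} :
    x ∈ Bset T r d U S iv v ↔ ∃ st, RealizesCells T r d U S iv v st ∧ x = d (st (iv v)) v := by
  have hcells := fun st : Fin k → V => cells_eq_iff_strictCells (φ := fun j => d (st j))
    hU.mem_iff fun u hu => hU.iv_mem_Jset (r := r) (v := v) hu
  exact exists_congr fun st =>
    ⟨fun ⟨h₁, h₂, h₃⟩ => ⟨⟨h₁, (hcells st).1 h₂⟩, h₃⟩,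
     fun ⟨⟨h₁, h₂⟩, h₃⟩ => ⟨h₁, (hcells st).2 h₂, h₃⟩⟩

theorem mem_Aset_iff (hU : IsConnectedPartition T U iv) {c : V} {α : ℝ} :
    α ∈ Aset T r d U S iv c ↔ 0 < α ∧ ∃ st : Fin k → V,
      (∀ j ∈ Jset T r U c, j ≠ iv c → st j ∈ S j) ∧
      StrictCells iv (descend T r c) (Jset T r U c)
        (update (fun j => d (st j)) (iv c) fun u => α + d c u) := by
  have hcJ : iv c ∈ Jset T r U c := hU.iv_mem_Jset (mem_descend_self c)
  refine and_congr_right' (exists_congr fun st => and_congr_right' ?_)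
  set φ := update (fun j => d (st j)) (iv c) fun u => α + d c u with hφ
  have hsplit : ∀ j u, (∀ t ∈ Jset T r U c, φ j u ≤ φ t u) ↔
      (∀ t ∈ Jset T r U c, t ≠ iv c → φ j u ≤ d (st t) u) ∧ φ j u ≤ α + d c u := by
    refine fun j u => ⟨fun h => ⟨fun t ht hne => ?_, ?_⟩, fun ⟨h₁, h₂⟩ t ht => ?_⟩
    · simpa [φ, update_of_ne hne] using h t ht
    · simpa [φ] using h _ hcJ
    · rcases eq_or_ne t (iv c) with rfl | hne
      · simpa [φ] using h₂
      · simpa [φ, update_of_ne hne] using h₁ t ht hne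
  have hcell_ne : ∀ j ≠ iv c, {u | u ∈ descend T r c ∧ ∀ t ∈ Jset T r U c, φ j u ≤ φ t u} =
      {u | u ∈ descend T r c ∧ (∀ t ∈ Jset T r U c, t ≠ iv c → d (st j) u ≤ d (st t) u) ∧
        d (st j) u ≤ α + d c u} := by
    intro j hj
    ext u
    simp only [Set.mem_ofPred_eq]
    rw [hsplit]
    simp only [hφ, update_of_ne hj]
  have hcell_c : {u | u ∈ descend T r c ∧ ∀ t ∈ Jset T r U c, φ (iv c) u ≤ φ t u} =
      {u | u ∈ descend T r c ∧ ∀ t ∈ Jset T r U c, t ≠ iv c → α + d c u ≤ d (st t) u} := by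
    ext u
    simp only [Set.mem_ofPred_eq]
    rw [hsplit]
    simp only [hφ, update_self, le_refl, and_true]
  rw [← cells_eq_iff_strictCells hU.mem_iff fun u hu => hU.iv_mem_Jset hu]
  constructor
  · rintro ⟨hne, hcc⟩ j hj
    rcases eq_or_ne j (iv c) with rfl | hjc
    · rw [hcell_c]; exact hcc
    · rw [hcell_ne j hjc]; exact hne j hj hjc
  · intro h
    exact ⟨fun j hj hjc => hcell_ne j hjc ▸ h j hj, hcell_c ▸ h _ hcJ⟩

end Characterizations

-- The constraint that a child `c` puts on `x = d(s, v)` when the site `s` of the cell of `v`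
-- lies outside `T(c)`.
def FarCond {V : Type*} (T : SimpleGraph V) (r : V) (w : Sym2 V → ℝ) (d : V → V → ℝ) {k : ℕ}
    (U S : Fin k → Set V) (iv : V → Fin k) (v c : V) (x : ℝ) : Prop :=
  (iv v = iv c → x ∈ Ashift T r w d U S iv v c) ∧ (iv v ≠ iv c → x ∈ Cshift T r w d U S iv v c)

-- What the subtree of a child `c` contributes to a placement for `v`; `φ` is the distance from
-- the site of the cell of `v`, possibly the pseudo-site of `A(c)`.
def ChildPlacement {V : Type*} (T : SimpleGraph V) (r : V) (d : V → V → ℝ) {k : ℕ}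
    (U S : Fin k → Set V) (iv : V → Fin k) (v c : V) (x : ℝ) (st : Fin k → V) (φ : V → ℝ) :
    Prop :=
  (∀ j ∈ Jset T r U c, j ≠ iv v → st j ∈ S j ∩ descend T r c) ∧
  (∀ t ∈ Jset T r U c, t ≠ iv v → x < d (st t) v) ∧
  StrictCells iv (descend T r c) (insert (iv v) (Jset T r U c))
    (update (fun j => d (st j)) (iv v) φ)

section Recurrence

variable {V : Type*} {T : SimpleGraph V} {w : Sym2 V → ℝ} {d : V → V → ℝ} {r v v₁ v₂ : V}
  {k : ℕ} {U S : Fin k → Set V} {iv : V → Fin k}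
  (hm : IsTreeMetric T w d) (hc : IsChildPair T r v v₁ v₂) (hU : IsConnectedPartition T U iv)
  (hSU : ∀ i, S i ⊆ U i)

theorem RealizesCells.restrict {c : V} {st : Fin k → V} (hst : RealizesCells T r d U S iv v st)
    (hcv : c ∈ descend T r v) (hsites : ∀ j ∈ Jset T r U c, st j ∈ descend T r c) :
    RealizesCells T r d U S iv c st :=
  ⟨fun j hj => ⟨(hst.1 j (Jset_mono hcv hj)).1, hsites j hj⟩,
    hst.2.mono (descend_subset_descend hcv) (Jset_mono hcv)⟩

include hm hc hU hSU in
theorem RealizesCells.mem_descend_left {st : Fin k → V} (hst : RealizesCells T r d U S iv v st)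
    {j : Fin k} (hj : j ∈ Jset T r U v₁) (hjv : j ≠ iv v) : st j ∈ descend T r v₁ :=
  have hsj := hst.1 j (Jset_mono hc.left_mem hj)
  hU.mem_descend_left_of_mem hc hm.isTree hj hjv (hSU j hsj.1) hsj.2

include hm hc in
theorem StrictCells.of_insert_left {st : Fin k → V}
    (hsites : ∀ j ∈ Jset T r U v, st j ∈ U j ∩ descend T r v)
    (hv : ∀ t ∈ Jset T r U v, t ≠ iv v → d (st (iv v)) v < d (st t) v)
    (h₁ : StrictCells iv (descend T r v₁) (insert (iv v) (Jset T r U v₁)) fun j => d (st j)) :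
    StrictCells iv (descend T r v₁) (Jset T r U v) fun j => d (st j) := by
  intro u hu t ht htu
  by_cases ht₁ : t ∈ insert (iv v) (Jset T r U v₁)
  · exact h₁ u hu t ht₁ htu
  rw [Set.mem_insert_iff, not_or] at ht₁
  have hout : st t ∉ descend T r v₁ := fun h => ht₁.2 ⟨st t, (hsites t ht).1, h⟩
  -- the site of `t` reaches `u` through `v`, where the site of the cell of `v` is already closer
  calc d (st (iv u)) u ≤ d (st (iv v)) u := h₁.le hu (Set.mem_insert _ _)
    _ ≤ d (st (iv v)) v + d v u := hm.dist_triangle _ _ _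
    _ < d (st t) v + d v u := by linarith [hv t ht ht₁.1]
    _ = d (st t) u := (hc.dist_eq_add_of_notMem_descend hm (hsites t ht).2 hout hu).symm

include hm hc in
theorem strictCells_of_children {st : Fin k → V}
    (hsites : ∀ j ∈ Jset T r U v, st j ∈ U j ∩ descend T r v)
    (hv : ∀ t ∈ Jset T r U v, t ≠ iv v → d (st (iv v)) v < d (st t) v)
    (h₁ : StrictCells iv (descend T r v₁) (insert (iv v) (Jset T r U v₁)) fun j => d (st j))
    (h₂ : StrictCells iv (descend T r v₂) (insert (iv v) (Jset T r U v₂)) fun j => d (st j)) :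
    StrictCells iv (descend T r v) (Jset T r U v) fun j => d (st j) := by
  intro u hu t ht htu
  rcases hc.eq_or_mem_descend hm.isTree hu with rfl | hu₁ | hu₂
  · exact hv t ht htu
  · exact StrictCells.of_insert_left hm hc hsites hv h₁ u hu₁ t ht htu
  · exact StrictCells.of_insert_left hm hc.symm hsites hv h₂ u hu₂ t ht htu

include hm hc hU in
theorem mem_Ashift_of_realizesCells {st : Fin k → V} (hst : RealizesCells T r d U S iv v st)
    (hout : st (iv v) ∉ descend T r v₁) (hv₁ : iv v = iv v₁) :
    d (st (iv v)) v ∈ Ashift T r w d U S iv v v₁ := by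
  have hsv := hst.1 _ (hU.iv_mem_Jset (mem_descend_self v))
  refine ⟨d (st (iv v)) v + w s(v, v₁), ?_, by ring⟩
  have hα : 0 < d (st (iv v)) v + w s(v, v₁) := by
    linarith [hm.dist_nonneg (st (iv v)) v, hm.weight_pos_of_adj hc.adj_left]
  refine (mem_Aset_iff hU).2 ⟨hα, st, fun j hj _ => (hst.1 j (Jset_mono hc.left_mem hj)).1, ?_⟩
  refine (hst.2.mono (descend_subset_descend hc.left_mem) (Jset_mono hc.left_mem)).congr
    (fun u hu => hU.iv_mem_Jset hu) fun j _ u hu => ?_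
  rcases eq_or_ne j (iv v₁) with rfl | hj
  · rw [update_self, ← hv₁, hc.dist_eq_add_of_notMem_descend hm hsv.2 hout hu,
      hm.dist_parent_left hc.adj_left hc.left_mem hu]
    ring
  · rw [update_of_ne hj]

include hm hc hU hSU in
theorem mem_Cshift_of_realizesCells {st : Fin k → V} (hst : RealizesCells T r d U S iv v st)
    (hout : st (iv v) ∉ descend T r v₁) (hv₁ : iv v ≠ iv v₁) :
    d (st (iv v)) v ∈ Cshift T r w d U S iv v v₁ := by
  have hvJ : iv v ∈ Jset T r U v := hU.iv_mem_Jset (mem_descend_self v)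
  have h₁J : iv v₁ ∈ Jset T r U v₁ := hU.iv_mem_Jset (mem_descend_self v₁)
  refine ⟨d (st (iv v₁)) v₁, ?_, ?_, ?_⟩
  · refine (mem_Bset_iff hU).2 ⟨st, hst.restrict hc.left_mem fun j hj => ?_, rfl⟩
    exact hst.mem_descend_left hm hc hU hSU hj
      fun h => hv₁ ((hU.iv_mem_Jset_left_iff hc hm.isTree).1 (h ▸ hj))
  · have : d (st (iv v₁)) v₁ < d (st (iv v)) v₁ := hst.2 v₁ hc.left_mem (iv v) hvJ hv₁
    rw [hc.dist_eq_add_of_notMem_descend hm (hst.1 _ hvJ).2 hout (mem_descend_self v₁),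
      hm.dist_of_adj hc.adj_left] at this
    linarith
  · have : d (st (iv v)) v < d (st (iv v₁)) v :=
      hst.2 v (mem_descend_self v) (iv v₁) (Jset_mono hc.left_mem h₁J) (Ne.symm hv₁)
    rwa [hm.dist_parent_right hc.adj_left hc.left_mem
      (hst.mem_descend_left hm hc hU hSU h₁J (Ne.symm hv₁))] at this

include hm hc hU hSU in
theorem farCond_of_realizesCells {st : Fin k → V} (hst : RealizesCells T r d U S iv v st)
    (hout : st (iv v) ∉ descend T r v₁) : FarCond T r w d U S iv v v₁ (d (st (iv v)) v) :=
  ⟨mem_Ashift_of_realizesCells hm hc hU hst hout, mem_Cshift_of_realizesCells hm hc hU hSU hst hout⟩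

include hm hc hU hSU in
theorem mem_Bshift_of_realizesCells {st : Fin k → V} (hst : RealizesCells T r d U S iv v st)
    (hin : st (iv v) ∈ descend T r v₁) :
    iv v = iv v₁ ∧ d (st (iv v)) v ∈ Bshift T r w d U S iv v v₁ := by
  have hsv := hst.1 _ (hU.iv_mem_Jset (mem_descend_self v))
  have hv₁ : iv v = iv v₁ := (hU.iv_mem_Jset_left_iff hc hm.isTree).1 ⟨_, hSU _ hsv.1, hin⟩
  refine ⟨hv₁, d (st (iv v)) v₁, ?_, hm.dist_parent_right hc.adj_left hc.left_mem hin⟩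
  refine (mem_Bset_iff hU).2 ⟨st, hst.restrict hc.left_mem fun j hj => ?_, by rw [hv₁]⟩
  rcases eq_or_ne j (iv v) with rfl | hjv
  exacts [hin, hst.mem_descend_left hm hc hU hSU hj hjv]

include hm hc hU in
theorem exists_childPlacement_of_mem_Bshift {x : ℝ} (hv₁ : iv v = iv v₁)
    (hx : x ∈ Bshift T r w d U S iv v v₁) :
    ∃ st, st (iv v) ∈ S (iv v) ∩ descend T r v₁ ∧ d (st (iv v)) v = x ∧
      ChildPlacement T r d U S iv v v₁ x st (d (st (iv v))) := by
  obtain ⟨y, hy, rfl⟩ := hx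
  obtain ⟨st, hst, rfl⟩ := (mem_Bset_iff hU).1 hy
  rw [← hv₁]
  have hvJ : iv v ∈ Jset T r U v₁ := hv₁ ▸ hU.iv_mem_Jset (mem_descend_self v₁)
  have hsv := hst.1 _ hvJ
  refine ⟨st, hsv, hm.dist_parent_right hc.adj_left hc.left_mem hsv.2,
    fun j hj _ => hst.1 j hj, fun t ht htv => ?_, ?_⟩
  · have : d (st (iv v₁)) v₁ < d (st t) v₁ := hst.2 v₁ (mem_descend_self v₁) t ht (hv₁ ▸ htv)
    rw [← hv₁] at this
    rw [hm.dist_parent_right hc.adj_left hc.left_mem (hst.1 t ht).2]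
    linarith
  · rw [update_eq_self, Set.insert_eq_of_mem hvJ]
    exact hst.2

include hm hc hU hSU in
theorem exists_childPlacement_of_mem_Ashift {x : ℝ} (hv₁ : iv v = iv v₁)
    (hx : x ∈ Ashift T r w d U S iv v v₁) :
    ∃ st, ChildPlacement T r d U S iv v v₁ x st fun u => x + d v u := by
  obtain ⟨α, hα, rfl⟩ := hx
  obtain ⟨-, st, hsites, hcells⟩ := (mem_Aset_iff hU).1 hα
  have hvJ : iv v ∈ Jset T r U v₁ := hv₁ ▸ hU.iv_mem_Jset (mem_descend_self v₁)
  have hsites' : ∀ j ∈ Jset T r U v₁, j ≠ iv v → st j ∈ S j ∩ descend T r v₁ := by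
    intro j hj hjv
    have hj₁ : j ≠ iv v₁ := hv₁ ▸ hjv
    exact ⟨hsites j hj hj₁,
      hU.subset_descend_of_mem_Jset hm.isTree hj hj₁ (hSU j (hsites j hj hj₁))⟩
  refine ⟨st, hsites', fun t ht htv => ?_, ?_⟩
  · have : α + d v₁ v₁ < d (st t) v₁ := by
      simpa [update_of_ne (hv₁ ▸ htv : t ≠ iv v₁)] using
        hcells v₁ (mem_descend_self v₁) t ht (hv₁ ▸ htv)
    rw [hm.dist_self] at this
    rw [hm.dist_parent_right hc.adj_left hc.left_mem (hsites' t ht htv).2]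
    linarith [hm.weight_pos_of_adj hc.adj_left]
  · rw [Set.insert_eq_of_mem hvJ]
    refine hcells.congr (fun u hu => hU.iv_mem_Jset hu) fun j _ u hu => ?_
    rcases eq_or_ne j (iv v) with rfl | hjv
    · rw [update_self, hv₁, update_self, hm.dist_parent_left hc.adj_left hc.left_mem hu]
      ring
    · rw [update_of_ne hjv, update_of_ne (hv₁ ▸ hjv)]

include hm hc hU in
theorem exists_childPlacement_of_mem_Cshift {x : ℝ} (hv₁ : iv v ≠ iv v₁)
    (hx : x ∈ Cshift T r w d U S iv v v₁) :
    ∃ st, ChildPlacement T r d U S iv v v₁ x st fun u => x + d v u := by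
  obtain ⟨y, hy, hlo, hhi⟩ := hx
  obtain ⟨st, hst, rfl⟩ := (mem_Bset_iff hU).1 hy
  have hvJ : iv v ∉ Jset T r U v₁ := mt (hU.iv_mem_Jset_left_iff hc hm.isTree).1 hv₁
  have h₁J : iv v₁ ∈ Jset T r U v₁ := hU.iv_mem_Jset (mem_descend_self v₁)
  refine ⟨st, fun j hj _ => hst.1 j hj, fun t ht _ => ?_, fun u hu t ht htu => ?_⟩
  · have : d (st (iv v₁)) v₁ ≤ d (st t) v₁ := hst.2.le (mem_descend_self v₁) ht
    rw [hm.dist_parent_right hc.adj_left hc.left_mem (hst.1 t ht).2]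
    linarith
  have huv : iv u ≠ iv v := fun h => hvJ (h ▸ hU.iv_mem_Jset hu)
  rw [update_of_ne huv]
  rcases Set.mem_insert_iff.1 ht with rfl | ht
  · rw [update_self]
    calc d (st (iv u)) u ≤ d (st (iv v₁)) u := hst.2.le hu h₁J
      _ ≤ d (st (iv v₁)) v₁ + d v₁ u := hm.dist_triangle _ _ _
      _ < x + d v u := by
        rw [hm.dist_parent_left hc.adj_left hc.left_mem hu]
        linarith
  · rw [update_of_ne (ne_of_mem_of_not_mem ht hvJ)]
    exact hst.2 u hu t ht htu

include hm hc hU hSU in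
theorem exists_childPlacement_of_farCond {x : ℝ} (hx : FarCond T r w d U S iv v v₁ x) :
    ∃ st, ChildPlacement T r d U S iv v v₁ x st fun u => x + d v u := by
  by_cases hv₁ : iv v = iv v₁
  · exact exists_childPlacement_of_mem_Ashift hm hc hU hSU hv₁ (hx.1 hv₁)
  · exact exists_childPlacement_of_mem_Cshift hm hc hU hv₁ (hx.2 hv₁)

include hU in
theorem ChildPlacement.strictCells {c : V} {x : ℝ} {st stc : Fin k → V} {φ : V → ℝ}
    (h : ChildPlacement T r d U S iv v c x stc φ)
    (hφ : ∀ u ∈ descend T r c, φ u = d (st (iv v)) u)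
    (hst : ∀ j ∈ Jset T r U c, j ≠ iv v → stc j = st j) :
    StrictCells iv (descend T r c) (insert (iv v) (Jset T r U c)) fun j => d (st j) := by
  refine h.2.2.congr (fun u hu => Set.mem_insert_of_mem _ (hU.iv_mem_Jset hu)) fun j hj u hu => ?_
  rcases eq_or_ne j (iv v) with rfl | hjv
  · rw [update_self, hφ u hu]
  · rw [update_of_ne hjv, hst j ((Set.mem_insert_iff.1 hj).resolve_left hjv) hjv]

include hm hc hU hSU in
theorem mem_Bset_of_childPlacements {x : ℝ} {s : V} {st₁ st₂ : Fin k → V} {φ₁ φ₂ : V → ℝ}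
    (hs : s ∈ S (iv v) ∩ descend T r v) (hsx : d s v = x)
    (h₁ : ChildPlacement T r d U S iv v v₁ x st₁ φ₁)
    (h₂ : ChildPlacement T r d U S iv v v₂ x st₂ φ₂)
    (hφ₁ : ∀ u ∈ descend T r v₁, φ₁ u = d s u) (hφ₂ : ∀ u ∈ descend T r v₂, φ₂ u = d s u) :
    x ∈ Bset T r d U S iv v := by
  classical
  let st : Fin k → V := fun j =>
    if j = iv v then s else if j ∈ Jset T r U v₁ then st₁ j else st₂ j
  have hst₁ : ∀ j ∈ Jset T r U v₁, j ≠ iv v → st₁ j = st j := fun j hj hjv => by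
    simp [st, hjv, hj]
  have hst₂ : ∀ j ∈ Jset T r U v₂, j ≠ iv v → st₂ j = st j := fun j hj hjv => by
    have hj₁ : j ∉ Jset T r U v₁ := fun h => hjv (hU.eq_of_mem_Jset_left_right hc hm.isTree h hj)
    simp [st, hjv, hj₁]
  have hcases : ∀ j ∈ Jset T r U v, j ≠ iv v →
      (st j ∈ S j ∩ descend T r v ∧ x < d (st j) v) := by
    intro j hj hjv
    rcases hU.mem_Jset_cases hc hm.isTree hj with h | h | h
    · exact absurd h hjv
    · rw [← hst₁ j h hjv]
      exact ⟨⟨(h₁.1 j h hjv).1, descend_subset_descend hc.left_mem (h₁.1 j h hjv).2⟩,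
        h₁.2.1 j h hjv⟩
    · rw [← hst₂ j h hjv]
      exact ⟨⟨(h₂.1 j h hjv).1, descend_subset_descend hc.symm.left_mem (h₂.1 j h hjv).2⟩,
        h₂.2.1 j h hjv⟩
  have hsites : ∀ j ∈ Jset T r U v, st j ∈ S j ∩ descend T r v := by
    intro j hj
    rcases eq_or_ne j (iv v) with rfl | hjv
    · simpa [st] using hs
    · exact (hcases j hj hjv).1
  have hsv : st (iv v) = s := by simp [st]
  refine (mem_Bset_iff hU).2 ⟨st, ⟨hsites, ?_⟩, by rw [hsv, hsx]⟩
  refine strictCells_of_children hm hc (fun j hj => ⟨hSU j (hsites j hj).1, (hsites j hj).2⟩)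
    (fun t ht htv => hsv ▸ hsx ▸ (hcases t ht htv).2) ?_ ?_
  · exact h₁.strictCells hU (fun u hu => hsv ▸ hφ₁ u hu) hst₁
  · exact h₂.strictCells hU (fun u hu => hsv ▸ hφ₂ u hu) hst₂

include hm hc hU hSU in
theorem mem_Bset_of_mem_chiSet {x : ℝ} (hx : x ∈ chiSet T r w d U S iv v v₁ v₂) :
    x ∈ Bset T r d U S iv v := by
  obtain ⟨rfl, hvS, hA₁, hC₁, hA₂, hC₂⟩ := hx
  obtain ⟨st₁, h₁⟩ := exists_childPlacement_of_farCond hm hc hU hSU ⟨hA₁, hC₁⟩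
  obtain ⟨st₂, h₂⟩ := exists_childPlacement_of_farCond hm hc.symm hU hSU ⟨hA₂, hC₂⟩
  exact mem_Bset_of_childPlacements hm hc hU hSU ⟨hvS, mem_descend_self v⟩ (hm.dist_self v) h₁ h₂
    (fun u _ => zero_add _) fun u _ => zero_add _

include hm hc hU hSU in
theorem mem_Bset_of_mem_Bshift_of_farCond {x : ℝ} (hv₁ : iv v = iv v₁)
    (hB : x ∈ Bshift T r w d U S iv v v₁) (hF : FarCond T r w d U S iv v v₂ x) :
    x ∈ Bset T r d U S iv v := by
  obtain ⟨st₁, hs, hsx, h₁⟩ := exists_childPlacement_of_mem_Bshift hm hc hU hv₁ hB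
  obtain ⟨st₂, h₂⟩ := exists_childPlacement_of_farCond hm hc.symm hU hSU hF
  have hsv : st₁ (iv v) ∈ descend T r v := descend_subset_descend hc.left_mem hs.2
  refine mem_Bset_of_childPlacements hm hc hU hSU ⟨hs.1, hsv⟩ hsx h₁ h₂ (fun _ _ => rfl)
    fun u hu => ?_
  rw [hc.symm.dist_eq_add_of_notMem_descend hm hsv
    (Set.disjoint_left.1 (hc.disjoint_descend hm.isTree) hs.2) hu, hsx]

include hm hc hU hSU in
theorem mem_Bset_iff_recurrence {x : ℝ} :
    x ∈ Bset T r d U S iv v ↔ x ∈ chiSet T r w d U S iv v v₁ v₂ ∨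
      (iv v = iv v₁ ∧ x ∈ Bshift T r w d U S iv v v₁ ∧ FarCond T r w d U S iv v v₂ x) ∨
      (iv v = iv v₂ ∧ x ∈ Bshift T r w d U S iv v v₂ ∧ FarCond T r w d U S iv v v₁ x) := by
  refine ⟨fun hx => ?_, ?_⟩
  · obtain ⟨st, hst, rfl⟩ := (mem_Bset_iff hU).1 hx
    have hsv := hst.1 _ (hU.iv_mem_Jset (mem_descend_self v))
    rcases hc.eq_or_mem_descend hm.isTree hsv.2 with hv | h₁ | h₂
    · have hF₁ := farCond_of_realizesCells hm hc hU hSU hst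
        (by rw [hv]; exact hc.notMem_left hm.isTree)
      have hF₂ := farCond_of_realizesCells hm hc.symm hU hSU hst
        (by rw [hv]; exact hc.symm.notMem_left hm.isTree)
      have hvS := hsv.1
      rw [hv, hm.dist_self] at hF₁ hF₂ ⊢
      rw [hv] at hvS
      exact .inl ⟨rfl, hvS, hF₁.1, hF₁.2, hF₂.1, hF₂.2⟩
    · obtain ⟨hv₁, hB⟩ := mem_Bshift_of_realizesCells hm hc hU hSU hst h₁
      exact .inr <| .inl ⟨hv₁, hB, farCond_of_realizesCells hm hc.symm hU hSU hst
        (Set.disjoint_left.1 (hc.disjoint_descend hm.isTree) h₁)⟩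
    · obtain ⟨hv₂, hB⟩ := mem_Bshift_of_realizesCells hm hc.symm hU hSU hst h₂
      exact .inr <| .inr ⟨hv₂, hB, farCond_of_realizesCells hm hc hU hSU hst
        (Set.disjoint_right.1 (hc.disjoint_descend hm.isTree) h₂)⟩
  · rintro (hx | ⟨hv₁, hB, hF⟩ | ⟨hv₂, hB, hF⟩)
    · exact mem_Bset_of_mem_chiSet hm hc hU hSU hx
    · exact mem_Bset_of_mem_Bshift_of_farCond hm hc hU hSU hv₁ hB hF
    · exact mem_Bset_of_mem_Bshift_of_farCond hm hc.symm hU hSU hv₂ hB hF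

end Recurrence

theorem Bset_recurrence_general
    {V : Type*} (T : SimpleGraph V) (hT : T.IsTree)
    (w : Sym2 V → ℝ) (hw : ∀ e ∈ T.edgeSet, 0 < w e)
    (d : V → V → ℝ)
    (hd : ∀ (u v : V) (p : T.Walk u v), p.IsPath → (p.edges.map w).sum = d u v)
    (r : V)
    (k : ℕ) (U S : Fin k → Set V)
    (hdisj : ∀ i j, i ≠ j → Disjoint (U i) (U j))
    (hUconn : ∀ i, (T.induce (U i)).Connected)
    (hSU : ∀ i, S i ⊆ U i)
    (iv : V → Fin k) (hiv : ∀ u, u ∈ U (iv u))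
    (v v₁ v₂ : V) (hne : v₁ ≠ v₂)
    (hchild : ∀ c : V, (T.Adj v c ∧ c ∈ descend T r v) ↔ (c = v₁ ∨ c = v₂)) :
    (iv v = iv v₁ ∧ iv v = iv v₂ →
      Bset T r d U S iv v = chiSet T r w d U S iv v v₁ v₂ ∪
        ((Bshift T r w d U S iv v v₁ ∩ Ashift T r w d U S iv v v₂) ∪
         (Bshift T r w d U S iv v v₂ ∩ Ashift T r w d U S iv v v₁))) ∧
    (iv v = iv v₁ ∧ iv v ≠ iv v₂ →
      Bset T r d U S iv v = chiSet T r w d U S iv v v₁ v₂ ∪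
        (Bshift T r w d U S iv v v₁ ∩ Cshift T r w d U S iv v v₂)) ∧
    (iv v = iv v₂ ∧ iv v ≠ iv v₁ →
      Bset T r d U S iv v = chiSet T r w d U S iv v v₁ v₂ ∪
        (Bshift T r w d U S iv v v₂ ∩ Cshift T r w d U S iv v v₁)) ∧
    (iv v ≠ iv v₁ ∧ iv v ≠ iv v₂ →
      Bset T r d U S iv v = chiSet T r w d U S iv v v₁ v₂) := by
  have hU : IsConnectedPartition T U iv :=
    ⟨fun u j => ⟨fun hu => by_contra fun h => Set.disjoint_left.1 (hdisj _ _ h) (hiv u) hu,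
      fun h => h ▸ hiv u⟩, hUconn⟩
  have key := fun x => mem_Bset_iff_recurrence (x := x) ⟨hT, hw, hd⟩ ⟨hne, hchild⟩ hU hSU
  refine ⟨fun ⟨h₁, h₂⟩ => ?_, fun ⟨h₁, h₂⟩ => ?_, fun ⟨h₂, h₁⟩ => ?_, fun ⟨h₁, h₂⟩ => ?_⟩ <;>
    ext x <;> rw [key] <;> simp only [FarCond, Set.mem_union, Set.mem_inter_iff] <;> tauto

/-- The dynamic-programming recurrence for `B(v)` at a vertex `v` with two children
`v₁, v₂`, by cases on whether the cells of `v₁`, `v₂` agree with the cell of `v`. -/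
theorem Bset_recurrence
    {V : Type*} [Fintype V] [DecidableEq V] (T : SimpleGraph V) (hT : T.IsTree)
    (w : Sym2 V → ℝ) (hw : ∀ e ∈ T.edgeSet, 0 < w e)
    (d : V → V → ℝ)
    (hd : ∀ (u v : V) (p : T.Walk u v), p.IsPath → (p.edges.map w).sum = d u v)
    (r : V) (hroot : ∃! u, T.Adj r u)
    (hdeg : ∀ u : V, ({c | T.Adj u c ∧ c ∈ descend T r u} : Set V).ncard ≤ 2)
    (k : ℕ) (U S : Fin k → Set V)
    (hcover : (⋃ i, U i) = Set.univ)
    (hdisj : ∀ i j, i ≠ j → Disjoint (U i) (U j))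
    (hUconn : ∀ i, (T.induce (U i)).Connected)
    (hSU : ∀ i, S i ⊆ U i)
    (iv : V → Fin k) (hiv : ∀ u, u ∈ U (iv u))
    (v v₁ v₂ : V) (hne : v₁ ≠ v₂)
    (hchild : ∀ c : V, (T.Adj v c ∧ c ∈ descend T r v) ↔ (c = v₁ ∨ c = v₂)) :
    (iv v = iv v₁ ∧ iv v = iv v₂ →
      Bset T r d U S iv v = chiSet T r w d U S iv v v₁ v₂ ∪
        ((Bshift T r w d U S iv v v₁ ∩ Ashift T r w d U S iv v v₂) ∪
         (Bshift T r w d U S iv v v₂ ∩ Ashift T r w d U S iv v v₁))) ∧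
    (iv v = iv v₁ ∧ iv v ≠ iv v₂ →
      Bset T r d U S iv v = chiSet T r w d U S iv v v₁ v₂ ∪
        (Bshift T r w d U S iv v v₁ ∩ Cshift T r w d U S iv v v₂)) ∧
    (iv v = iv v₂ ∧ iv v ≠ iv v₁ →
      Bset T r d U S iv v = chiSet T r w d U S iv v v₁ v₂ ∪
        (Bshift T r w d U S iv v v₂ ∩ Cshift T r w d U S iv v v₁)) ∧
    (iv v ≠ iv v₁ ∧ iv v ≠ iv v₂ →
      Bset T r d U S iv v = chiSet T r w d U S iv v v₁ v₂) :=
  Bset_recurrence_general T hT w hw d hd r k U S hdisj hUconn hSU iv hiv v v₁ v₂ hne hchild
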